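/- A nonnegative random variable X has the half-normal distribution (the law of |Z| for Z standard normal) if and only if E[f'(X)] = E[X f(X)] - f(0)·sqrt(2/π) for all functions f : [0,∞) → ℝ that are absolutely continuous on every compact subinterval of [0,∞) and satisfy E|f'(|Z|)| < ∞. -/

import Mathlib

/-!
The half-normal law has density `2φ` on `(0, ∞)`. Substituting `f x = f 0 + ∫₀ˣ f'` into
`E[X f(X)]` and exchanging the order of integration gives its Stein identity, since the inner
integral is `∫ₓ^∞ t φ(t) dt = φ(x)`.

Conversely, for each `t` the function `fₜ x = Q(max x t) / φ(x)`, where `Q` is the upper tail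
of the standard normal law, solves `fₜ' = x fₜ - 1_{[t, ∞)}`. By the Mills-ratio bound
`x Q(x) ≤ φ(x)` it satisfies `0 ≤ x fₜ(x) ≤ 1` on `[0, ∞)`, so it is an admissible test
function. Plugging it into the identity gives `ν [t, ∞) = fₜ(0) √(2/π)`, a value that does not
depend on `ν`. The half-normal law satisfies the identity as well, so it has the same tails
as `ν`.
-/

open MeasureTheory ProbabilityTheory Real Set Filter Topology

section PrimitiveFubini

variable {h g : ℝ → ℝ}

lemma integral_Ioi_zero_indicator_Ioi {F : ℝ → ℝ} {x : ℝ} (hx : 0 ≤ x) :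
    ∫ t in Ioi 0, (Ioi x).indicator F t = ∫ t in Ioi x, F t := by
  rw [integral_indicator measurableSet_Ioi, Measure.restrict_restrict measurableSet_Ioi,
    inter_eq_left.2 (Ioi_subset_Ioi hx)]

lemma integral_Ioi_zero_indicator_Iio {F : ℝ → ℝ} {t : ℝ} (ht : 0 ≤ t) :
    ∫ x in Ioi 0, (Iio t).indicator F x = ∫ x in 0..t, F x := by
  rw [integral_indicator measurableSet_Iio, Measure.restrict_restrict measurableSet_Iio,
    Iio_inter_Ioi, intervalIntegral.integral_of_le ht, integral_Ioc_eq_integral_Ioo]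

lemma integrable_indicator_lt_mul (hh : AEStronglyMeasurable h (volume.restrict (Ioi 0)))
    (hg0 : ∀ t ∈ Ioi (0:ℝ), 0 ≤ g t) (hg : IntegrableOn g (Ioi 0))
    (hhg : IntegrableOn (fun x => h x * ∫ t in Ioi x, g t) (Ioi 0)) :
    Integrable ({q : ℝ × ℝ | q.1 < q.2}.indicator fun q => h q.1 * g q.2)
      ((volume.restrict (Ioi 0)).prod (volume.restrict (Ioi 0))) := by
  refine (integrable_prod_iff ((hh.comp_fst.mul hg.aestronglyMeasurable.comp_snd).indicator
    (measurableSet_lt measurable_fst measurable_snd))).2 ⟨ae_of_all _ fun x => ?_, ?_⟩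
  · exact (hg.const_mul (h x)).indicator measurableSet_Ioi
  · refine hhg.norm.congr ?_
    filter_upwards [ae_restrict_mem measurableSet_Ioi] with x (hx : 0 < x)
    calc ‖h x * ∫ t in Ioi x, g t‖ = ∫ t in Ioi x, ‖h x‖ * g t := by
          rw [integral_const_mul, norm_mul, Real.norm_of_nonneg
            (setIntegral_nonneg measurableSet_Ioi fun t ht => hg0 t (hx.trans ht))]
      _ = ∫ t in Ioi 0, (Ioi x).indicator (fun t => ‖h x * g t‖) t := by
          rw [integral_Ioi_zero_indicator_Ioi hx.le]
          refine setIntegral_congr_fun measurableSet_Ioi fun t ht => ?_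
          rw [norm_mul, Real.norm_of_nonneg (hg0 t (hx.trans ht))]
      _ = _ := by
          congr 1 with t
          exact (norm_indicator_eq_indicator_norm _ _).symm

lemma integral_Ioi_intervalIntegral_mul (hh : AEStronglyMeasurable h (volume.restrict (Ioi 0)))
    (hg0 : ∀ t ∈ Ioi (0:ℝ), 0 ≤ g t) (hg : IntegrableOn g (Ioi 0))
    (hhg : IntegrableOn (fun x => h x * ∫ t in Ioi x, g t) (Ioi 0)) :
    IntegrableOn (fun t => (∫ x in 0..t, h x) * g t) (Ioi 0) ∧
      ∫ t in Ioi 0, (∫ x in 0..t, h x) * g t = ∫ x in Ioi 0, h x * ∫ t in Ioi x, g t := by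
  set K : ℝ → ℝ → ℝ := fun x t =>
    {q : ℝ × ℝ | q.1 < q.2}.indicator (fun q => h q.1 * g q.2) (x, t)
  have hK : Integrable (Function.uncurry K) _ := integrable_indicator_lt_mul hh hg0 hg hhg
  have inner_fst : ∀ᵐ t ∂volume.restrict (Ioi 0),
      ∫ x in Ioi 0, K x t = (∫ x in 0..t, h x) * g t := by
    filter_upwards [ae_restrict_mem measurableSet_Ioi] with t (ht : 0 < t)
    exact (integral_Ioi_zero_indicator_Iio (F := fun x => h x * g t) ht.le).trans
      (intervalIntegral.integral_mul_const _ _)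
  have inner_snd : ∀ᵐ x ∂volume.restrict (Ioi 0),
      ∫ t in Ioi 0, K x t = h x * ∫ t in Ioi x, g t := by
    filter_upwards [ae_restrict_mem measurableSet_Ioi] with x (hx : 0 < x)
    exact (integral_Ioi_zero_indicator_Ioi (F := fun t => h x * g t) hx.le).trans
      (integral_const_mul _ _)
  refine ⟨hK.integral_prod_right.congr inner_fst, ?_⟩
  rw [← integral_congr_ae inner_fst, ← integral_congr_ae inner_snd]
  exact (integral_integral_swap hK).symm

end PrimitiveFubini

lemma MeasureTheory.Measure.AbsolutelyContinuous.map_abs {μ : Measure ℝ} (hμ : μ ≪ volume) :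
    μ.map (fun z => |z|) ≪ volume := by
  refine Measure.AbsolutelyContinuous.mk fun s hs hs0 => ?_
  rw [Measure.map_apply measurable_abs hs]
  refine hμ (measure_mono_null (fun x (hx : |x| ∈ s) => ?_)
    (measure_union_null hs0 ((Measure.measure_neg volume s).trans hs0)))
  rcases abs_choice x with h | h
  · exact Or.inl (h ▸ hx)
  · exact Or.inr (show -x ∈ s from h ▸ hx)

lemma ae_nonneg_map_abs (μ : Measure ℝ) : ∀ᵐ x ∂μ.map (fun z => |z|), 0 ≤ x :=
  (ae_map_iff measurable_abs.aemeasurable measurableSet_Ici).2 (ae_of_all _ abs_nonneg)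

local notation "φ" => gaussianPDFReal 0 1

lemma gaussianPDFReal_zero_one_apply (x : ℝ) :
    φ x = (√(2 * π))⁻¹ * exp (-x ^ 2 / 2) := by
  simp [gaussianPDFReal]

lemma gaussianPDFReal_zero_one_abs (x : ℝ) : φ |x| = φ x := by
  simp [gaussianPDFReal_zero_one_apply]

lemma two_mul_gaussianPDFReal_zero_one_zero : 2 * φ 0 = √(2 / π) := by
  rw [gaussianPDFReal_zero_one_apply, sqrt_div zero_le_two, sqrt_mul zero_le_two]
  have : 0 < √2 := by positivity
  field_simp
  simp [Real.sq_sqrt zero_le_two]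

lemma hasDerivAt_gaussianPDFReal_zero_one (x : ℝ) : HasDerivAt φ (-(x * φ x)) x := by
  rw [funext gaussianPDFReal_zero_one_apply]
  have h : HasDerivAt (fun y : ℝ => -y ^ 2 / 2) (-x) x :=
    ((hasDerivAt_pow 2 x).neg.div_const 2).congr_deriv (by ring)
  exact (h.exp.const_mul _).congr_deriv (by ring)

lemma continuous_gaussianPDFReal_zero_one : Continuous φ :=
  continuous_iff_continuousAt.2 fun x => (hasDerivAt_gaussianPDFReal_zero_one x).continuousAt

lemma integrable_mul_gaussianPDFReal_zero_one : Integrable fun x => x * φ x := by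
  simp_rw [gaussianPDFReal_zero_one_apply]
  refine ((integrable_mul_exp_neg_mul_sq (b := 1 / 2) (by norm_num)).const_mul
    (√(2 * π))⁻¹).congr (ae_of_all _ fun x => ?_)
  ring_nf

lemma tendsto_gaussianPDFReal_zero_one_atTop : Tendsto φ atTop (𝓝 0) := by
  have h : Tendsto (fun y : ℝ => -y ^ 2 / 2) atTop atBot :=
    (tendsto_neg_atBot_iff.2 (tendsto_pow_atTop two_ne_zero)).atBot_div_const two_pos
  rw [funext gaussianPDFReal_zero_one_apply]
  simpa using (tendsto_exp_atBot.comp h).const_mul (√(2 * π))⁻¹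

lemma integral_Ioi_mul_gaussianPDFReal_zero_one (x : ℝ) : ∫ t in Ioi x, t * φ t = φ x := by
  simpa using integral_Ioi_of_hasDerivAt_of_tendsto' (f := fun y => -φ y)
    (fun y _ => (hasDerivAt_gaussianPDFReal_zero_one y).neg.congr_deriv (neg_neg _))
    integrable_mul_gaussianPDFReal_zero_one.integrableOn
    tendsto_gaussianPDFReal_zero_one_atTop.neg

lemma integral_map_abs_gaussianReal {g : ℝ → ℝ}
    (hg : AEStronglyMeasurable g ((gaussianReal 0 1).map fun z => |z|)) :
    ∫ x, g x ∂(gaussianReal 0 1).map (fun z => |z|) = 2 * ∫ x in Ioi 0, φ x * g x := by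
  rw [integral_map measurable_abs.aemeasurable hg,
    integral_gaussianReal_eq_integral_smul one_ne_zero, ← integral_comp_abs]
  simp [gaussianPDFReal_zero_one_abs]

lemma integrableOn_Ioi_of_integrable_comp_abs {g : ℝ → ℝ}
    (hg : Integrable (fun z => g |z|) (gaussianReal 0 1)) :
    IntegrableOn (fun x => φ x * g x) (Ioi 0) := by
  rw [gaussianReal_of_var_ne_zero 0 one_ne_zero, integrable_withDensity_iff_integrable_smul'
    (measurable_gaussianPDF 0 1) (ae_of_all _ fun _ => gaussianPDF_lt_top)] at hg
  refine hg.integrableOn.congr_fun (fun x (hx : 0 < x) => ?_) measurableSet_Ioi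
  simp [abs_of_pos hx]

noncomputable def gaussianTail (x : ℝ) : ℝ := ∫ t in Ioi x, φ t

lemma gaussianTail_eq_sub_intervalIntegral (x : ℝ) :
    gaussianTail x = gaussianTail 0 - ∫ t in 0..x, φ t := by
  rw [gaussianTail, gaussianTail, ← intervalIntegral.integral_interval_add_Ioi
    (integrable_gaussianPDFReal 0 1).integrableOn (integrable_gaussianPDFReal 0 1).integrableOn,
    intervalIntegral.integral_symm]
  ring

lemma hasDerivAt_gaussianTail (x : ℝ) : HasDerivAt gaussianTail (-φ x) x := by
  rw [funext gaussianTail_eq_sub_intervalIntegral]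
  exact (intervalIntegral.integral_hasDerivAt_right
    (integrable_gaussianPDFReal 0 1).intervalIntegrable
    (continuous_gaussianPDFReal_zero_one.stronglyMeasurableAtFilter _ _)
    continuous_gaussianPDFReal_zero_one.continuousAt).const_sub _

lemma continuous_gaussianTail : Continuous gaussianTail :=
  continuous_iff_continuousAt.2 fun x => (hasDerivAt_gaussianTail x).continuousAt

lemma antitone_gaussianTail : Antitone gaussianTail := fun _ _ hxy =>
  setIntegral_mono_set (integrable_gaussianPDFReal 0 1).integrableOn
    (ae_of_all _ fun t => gaussianPDFReal_nonneg 0 1 t) (Ioi_subset_Ioi hxy).eventuallyLE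

lemma gaussianTail_nonneg (x : ℝ) : 0 ≤ gaussianTail x :=
  setIntegral_nonneg measurableSet_Ioi fun t _ => gaussianPDFReal_nonneg 0 1 t

lemma mul_gaussianTail_le (x : ℝ) : x * gaussianTail x ≤ φ x :=
  calc x * gaussianTail x = ∫ t in Ioi x, x * φ t := (integral_const_mul x _).symm
    _ ≤ ∫ t in Ioi x, t * φ t :=
      setIntegral_mono_on ((integrable_gaussianPDFReal 0 1).const_mul x).integrableOn
        integrable_mul_gaussianPDFReal_zero_one.integrableOn measurableSet_Ioi
        fun t ht => mul_le_mul_of_nonneg_right (le_of_lt ht) (gaussianPDFReal_nonneg 0 1 t)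
    _ = φ x := integral_Ioi_mul_gaussianPDFReal_zero_one x

noncomputable def steinSolution (t x : ℝ) : ℝ := gaussianTail (max x t) / φ x

noncomputable def steinSolutionDeriv (t x : ℝ) : ℝ :=
  x * steinSolution t x - (Ici t).indicator 1 x

/- The corner of `y ↦ gaussianTail (max y t)` at `t` is harmless: one-sided derivatives suffice
for the fundamental theorem of calculus (`integral_eq_sub_of_hasDeriv_right`). -/
lemma hasDerivWithinAt_gaussianTail_max (t x : ℝ) :
    HasDerivWithinAt (fun y => gaussianTail (max y t)) (-(Ici t).indicator φ x) (Ici x) x := by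
  rcases lt_or_ge x t with hxt | htx
  · have hconst : (fun y => gaussianTail (max y t)) =ᶠ[𝓝 x] fun _ => gaussianTail t := by
      filter_upwards [Iio_mem_nhds hxt] with y (hy : y < t)
      rw [max_eq_right hy.le]
    rw [indicator_of_notMem (show x ∉ Ici t from not_le.2 hxt), neg_zero]
    exact ((hasDerivAt_const x _).congr_of_eventuallyEq hconst).hasDerivWithinAt
  · rw [indicator_of_mem (show x ∈ Ici t from htx)]
    exact (hasDerivAt_gaussianTail x).hasDerivWithinAt.congr
      (fun y (hy : x ≤ y) => by rw [max_eq_left (htx.trans hy)]) (by rw [max_eq_left htx])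

lemma hasDerivWithinAt_steinSolution (t x : ℝ) :
    HasDerivWithinAt (steinSolution t) (steinSolutionDeriv t x) (Ici x) x := by
  have hφ := (gaussianPDFReal_pos 0 1 x one_ne_zero).ne'
  refine ((hasDerivWithinAt_gaussianTail_max t x).div
    (hasDerivAt_gaussianPDFReal_zero_one x).hasDerivWithinAt hφ).congr_deriv ?_
  rw [steinSolutionDeriv, steinSolution]
  by_cases hx : x ∈ Ici t
  · simp only [indicator_of_mem hx, Pi.one_apply]
    field_simp
    ring
  · simp only [indicator_of_notMem hx]
    field_simp
    ring

lemma continuous_steinSolution (t : ℝ) : Continuous (steinSolution t) :=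
  (continuous_gaussianTail.comp (continuous_id.max continuous_const)).div
    continuous_gaussianPDFReal_zero_one fun x => (gaussianPDFReal_pos 0 1 x one_ne_zero).ne'

lemma measurable_steinSolutionDeriv (t : ℝ) : Measurable (steinSolutionDeriv t) :=
  (continuous_id.mul (continuous_steinSolution t)).measurable.sub
    (measurable_one.indicator measurableSet_Ici)

lemma intervalIntegrable_steinSolutionDeriv (t a b : ℝ) :
    IntervalIntegrable (steinSolutionDeriv t) volume a b :=
  ((continuous_id.mul (continuous_steinSolution t)).intervalIntegrable a b).sub
    (intervalIntegrable_iff.2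
      ((integrableOn_const measure_Ioc_lt_top.ne).indicator measurableSet_Ici))

lemma steinSolution_eq_add_intervalIntegral (t x : ℝ) :
    steinSolution t x = steinSolution t 0 + ∫ y in 0..x, steinSolutionDeriv t y := by
  rw [intervalIntegral.integral_eq_sub_of_hasDeriv_right (continuous_steinSolution t).continuousOn
    (fun y _ => (hasDerivWithinAt_steinSolution t y).mono Ioi_subset_Ici_self)
    (intervalIntegrable_steinSolutionDeriv t 0 x)]
  ring

lemma mul_steinSolution_mem_Icc (t : ℝ) {x : ℝ} (hx : 0 ≤ x) :
    x * steinSolution t x ∈ Icc 0 1 := by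
  have hφ := gaussianPDFReal_pos 0 1 x one_ne_zero
  rw [steinSolution, mul_div_assoc']
  refine ⟨div_nonneg (mul_nonneg hx (gaussianTail_nonneg _)) hφ.le, (div_le_one hφ).2 ?_⟩
  exact (mul_le_mul_of_nonneg_left (antitone_gaussianTail (le_max_left x t)) hx).trans
    (mul_gaussianTail_le x)

lemma abs_steinSolutionDeriv_le (t : ℝ) {x : ℝ} (hx : 0 ≤ x) :
    |steinSolutionDeriv t x| ≤ 1 := by
  obtain ⟨h0, h1⟩ := mul_steinSolution_mem_Icc t hx
  rw [steinSolutionDeriv, abs_le]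
  by_cases hxt : x ∈ Ici t
  · simp only [indicator_of_mem hxt, Pi.one_apply]
    constructor <;> linarith
  · simp only [indicator_of_notMem hxt]
    constructor <;> linarith

def HalfNormalSteinIdentity (ν : Measure ℝ) : Prop :=
  ∀ f f' : ℝ → ℝ,
    (∀ a b : ℝ, IntervalIntegrable f' volume a b) →
    (∀ x : ℝ, 0 ≤ x → f x = f 0 + ∫ t in (0:ℝ)..x, f' t) →
    Integrable (fun z => f' |z|) (gaussianReal 0 1) →
    ∫ x, f' x ∂ν = (∫ x, x * f x ∂ν) - f 0 * √(2 / π)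

lemma halfNormalSteinIdentity_map_abs_gaussianReal :
    HalfNormalSteinIdentity ((gaussianReal 0 1).map fun z => |z|) := by
  intro f f' hf' hf hf'γ
  have hf'm : AEStronglyMeasurable f' volume :=
    (aecover_Ioc tendsto_neg_atTop_atBot tendsto_id).aestronglyMeasurable
      fun n => (hf' (-n) n).1.aestronglyMeasurable
  have hφf' : IntegrableOn (fun x => f' x * ∫ t in Ioi x, t * φ t) (Ioi 0) :=
    (integrableOn_Ioi_of_integrable_comp_abs hf'γ).congr_fun (fun x _ => by
      rw [integral_Ioi_mul_gaussianPDFReal_zero_one, mul_comm]) measurableSet_Ioi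
  obtain ⟨hint, hfubini⟩ := integral_Ioi_intervalIntegral_mul hf'm.restrict
    (fun t (ht : 0 < t) => mul_nonneg ht.le (gaussianPDFReal_nonneg 0 1 t))
    integrable_mul_gaussianPDFReal_zero_one.integrableOn hφf'
  simp only [integral_Ioi_mul_gaussianPDFReal_zero_one] at hfubini
  have hxf : ∫ x, x * f x ∂(gaussianReal 0 1).map (fun z => |z|) =
      2 * ∫ x in Ioi 0, φ x * (x * (f 0 + ∫ t in 0..x, f' t)) := by
    rw [integral_congr_ae ((ae_nonneg_map_abs _).mono fun x hx => by rw [hf x hx])]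
    exact integral_map_abs_gaussianReal (continuous_id.mul (continuous_const.add
      (intervalIntegral.continuous_primitive hf' 0))).aestronglyMeasurable
  have hsplit : ∫ x in Ioi 0, φ x * (x * (f 0 + ∫ t in 0..x, f' t)) =
      f 0 * φ 0 + ∫ x in Ioi 0, f' x * φ x :=
    calc _ = ∫ x in Ioi 0, f 0 * (x * φ x) + (∫ t in 0..x, f' t) * (x * φ x) := by
          congr 1 with x; ring
      _ = f 0 * (∫ x in Ioi 0, x * φ x) +
            ∫ x in Ioi 0, (∫ t in 0..x, f' t) * (x * φ x) := by
          rw [integral_add (integrable_mul_gaussianPDFReal_zero_one.integrableOn.const_mul _) hint,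
            integral_const_mul]
      _ = _ := by rw [← integral_Ioi_mul_gaussianPDFReal_zero_one 0, hfubini]
  rw [integral_map_abs_gaussianReal (hf'm.mono_ac
    (gaussianReal_absolutelyContinuous 0 one_ne_zero).map_abs), hxf, hsplit,
    ← two_mul_gaussianPDFReal_zero_one_zero]
  simp only [mul_comm (φ _)]
  ring

lemma measureReal_Ici_of_halfNormalSteinIdentity {ν : Measure ℝ} [IsFiniteMeasure ν]
    (hν : ∀ᵐ x ∂ν, 0 ≤ x) (hS : HalfNormalSteinIdentity ν) (t : ℝ) :
    ν.real (Ici t) = steinSolution t 0 * √(2 / π) := by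
  have hγ : Integrable (fun z => steinSolutionDeriv t |z|) (gaussianReal 0 1) :=
    .of_bound ((measurable_steinSolutionDeriv t).comp measurable_abs).aestronglyMeasurable 1
      (ae_of_all _ fun z => abs_steinSolutionDeriv_le t (abs_nonneg z))
  have hxf : Integrable (fun x => x * steinSolution t x) ν :=
    .of_bound (continuous_id.mul (continuous_steinSolution t)).aestronglyMeasurable 1
      (hν.mono fun x hx => abs_le.2 ⟨by linarith [(mul_steinSolution_mem_Icc t hx).1],
        (mul_steinSolution_mem_Icc t hx).2⟩)
  have hderiv :
      ∫ x, steinSolutionDeriv t x ∂ν = ∫ x, x * steinSolution t x ∂ν - ν.real (Ici t) :=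
    (integral_sub hxf ((integrable_const 1).indicator measurableSet_Ici)).trans
      (by rw [integral_indicator_one measurableSet_Ici])
  have hstein := hS _ _ (intervalIntegrable_steinSolutionDeriv t)
    (fun x _ => steinSolution_eq_add_intervalIntegral t x) hγ
  linarith

theorem stmt3 (ν : Measure ℝ) [IsProbabilityMeasure ν] (hν : ∀ᵐ x ∂ν, 0 ≤ x) :
    ν = (gaussianReal 0 1).map (fun z => |z|) ↔
      ∀ f f' : ℝ → ℝ,
        (∀ a b : ℝ, IntervalIntegrable f' volume a b) →
        (∀ x : ℝ, 0 ≤ x → f x = f 0 + ∫ t in (0:ℝ)..x, f' t) →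
        Integrable (fun z => f' |z|) (gaussianReal 0 1) →
        ∫ x, f' x ∂ν = (∫ x, x * f x ∂ν) - f 0 * Real.sqrt (2 / Real.pi) := by
  have hN := halfNormalSteinIdentity_map_abs_gaussianReal
  refine ⟨fun h => h ▸ hN, fun hS => ?_⟩
  have : IsProbabilityMeasure ((gaussianReal 0 1).map fun z => |z|) :=
    Measure.isProbabilityMeasure_map measurable_abs.aemeasurable
  refine Measure.ext_of_Ici _ _ fun t => (measureReal_eq_measureReal_iff).1 ?_
  rw [measureReal_Ici_of_halfNormalSteinIdentity hν hS,
    measureReal_Ici_of_halfNormalSteinIdentity (ae_nonneg_map_abs _) hN]
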